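/- Let M ≥ 2. Combining the M−1 encoded packets of one group with any single encoded packet whose id (r_1, …, r_M) is a permutation of {0,…,M−1} with r_1 ≠ 0 yields a set of M coefficient vectors of rank M. Precisely: the M × M matrix over ℚ whose first M−1 rows are the group vectors (2^{(M−1)−ρ_k(1)}, …, 2^{(M−1)−ρ_k(M)}) for the rotations ρ_k of (0,1,…,M−1) anchoring 0 at position 1, and whose last row is (2^{(M−1)−r_1}, …, 2^{(M−1)−r_M}) with (r_m) a permutation of {0,…,M−1} satisfying r_1 ≠ 0, is invertible. -/

import Mathlib

private lemma geo_sum (k : ℕ) : ∑ b ∈ Finset.range k, (2:ℚ)^b = 2^k - 1 := by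
  induction k with
  | zero => simp
  | succ k ih => rw [Finset.sum_range_succ, ih, pow_succ]; ring

private lemma key_elim (N j i : ℕ) (hj1 : 1 ≤ j) (hjN : j + 1 ≤ N) (hi : i < N) :
    (2:ℚ) * 2 ^ ((N - (j+1) + i) % N) - 2 ^ ((N - j + i) % N)
      = if i = j then 2 ^ N - 1 else 0 := by
  have hN : 1 ≤ N := by omega
  have hx : N - j + i = (N - (j+1) + i) + 1 := by omega
  set x := N - (j+1) + i with hxdef
  rw [hx]
  by_cases hij : i = j
  · subst hij
    have h1 : x = N - 1 := by omega
    have h2 : x % N = N - 1 := by rw [h1]; exact Nat.mod_eq_of_lt (by omega)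
    have h3 : (x+1) % N = 0 := by
      have hh : x + 1 = N := by omega
      rw [hh, Nat.mod_self]
    rw [h2, h3, if_pos rfl, pow_zero]
    have h5 : (2:ℚ)^N = 2 * 2^(N-1) := by
      conv_lhs => rw [show N = (N-1)+1 by omega]
      rw [pow_succ]; ring
    rw [h5]
  · have hN2 : 2 ≤ N := by omega
    have hxm : x % N < N - 1 := by
      rcases Nat.lt_or_ge x N with h | h
      · rw [Nat.mod_eq_of_lt h]; omega
      · have hlt : x - N < N := by omega
        rw [Nat.mod_eq_sub_mod h, Nat.mod_eq_of_lt hlt]; omega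
    have h4 : (x+1) % N = x % N + 1 := by
      rw [Nat.add_mod, Nat.mod_eq_of_lt (show 1 < N by omega),
        Nat.mod_eq_of_lt (show x % N + 1 < N by omega)]
    rw [h4, if_neg hij, pow_succ]
    ring

/-- The M × M matrix whose first M-1 rows are the coefficient vectors of one group
of triangular network coding (rotations of `(0,1,…,M-1)` anchored at position 1,
entry `2^((M-1) - r_j)`, i.e. `2^(M-1)` in column 0 and `2^((M-1-j+k) % (M-1))`
elsewhere) and whose last row is the coefficient vector of a packet whose id is a
permutation `r` of `{0,…,M-1}` with `r_1 ≠ 0`, is invertible. -/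
theorem stmt5 (M : ℕ) (hM : 2 ≤ M) (r : Equiv.Perm (Fin M))
    (hr : (r ⟨0, by omega⟩ : ℕ) ≠ 0) (D : Matrix (Fin M) (Fin M) ℚ)
    (hD : ∀ i j : Fin M,
      D i j = if (i : ℕ) < M - 1 then
          (if (j : ℕ) = 0 then 2 ^ (M - 1)
            else (2 : ℚ) ^ ((M - 1 - (j : ℕ) + (i : ℕ)) % (M - 1)))
        else (2 : ℚ) ^ (M - 1 - (r j : ℕ))) :
    IsUnit D := by
  rw [← Matrix.linearIndependent_rows_iff_isUnit]
  obtain ⟨N, rfl⟩ : ∃ N, M = N + 1 := ⟨M - 1, by omega⟩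
  have hN : 1 ≤ N := by omega
  have hNZ : NeZero N := ⟨by omega⟩
  have hzero : (⟨0, by omega⟩ : Fin (N+1)) = 0 := by
    apply Fin.ext; simp
  rw [hzero] at hr
  have hD' : ∀ i j : Fin (N+1), D i j = if (i:ℕ) < N then
      (if (j:ℕ) = 0 then (2:ℚ)^N else (2:ℚ)^((N - (j:ℕ) + (i:ℕ)) % N))
      else (2:ℚ) ^ (N - (r j : ℕ)) := by
    intro i j
    rw [hD i j]
    simp only [Nat.add_sub_cancel]
  rw [Fintype.linearIndependent_iff]
  intro c hc
  have hc' : ∀ j, ∑ i, c i * D i j = 0 := by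
    intro j
    have h := congrFun hc j
    simpa [Finset.sum_apply] using h
  -- row sums
  have rowsum : ∀ i : Fin (N+1), ∑ j, D i j = 2^(N+1) - 1 := by
    intro i
    by_cases hi : (i:ℕ) < N
    · rw [Fin.sum_univ_succ]
      have h0 : D i 0 = 2^N := by rw [hD' i 0]; simp [hi]
      open Fin.NatCast in
      have hsucc : ∀ j : Fin N, D i j.succ
          = (2:ℚ) ^ (((((i:ℕ) : Fin N) + Fin.rev j : Fin N)) : ℕ) := by
        intro j
        have hjlt := j.isLt
        rw [hD' i j.succ, if_pos hi, if_neg (by simp [Fin.val_succ])]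
        congr 1
        rw [Fin.val_add, Fin.val_rev, Fin.val_cast_of_lt hi]
        congr 1
        simp [Fin.val_succ]
        omega
      simp_rw [hsucc, h0]
      open Fin.NatCast in
      have heq : ∑ j : Fin N, (2:ℚ) ^ (((((i:ℕ) : Fin N) + Fin.rev j : Fin N)) : ℕ)
          = ∑ b : Fin N, (2:ℚ) ^ (b : ℕ) := by
        apply Fintype.sum_equiv (Fin.revPerm.trans (Equiv.addLeft (((i:ℕ) : Fin N))))
        intro j
        simp
      rw [heq, Fin.sum_univ_eq_sum_range (fun b => (2:ℚ)^b) N, geo_sum]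
      ring
    · have hlast : ∀ j, D i j = (2:ℚ)^(N - (r j : ℕ)) := fun j => by
        rw [hD' i j, if_neg hi]
      simp_rw [hlast]
      have heq : ∑ j : Fin (N+1), (2:ℚ)^(N - (r j : ℕ))
          = ∑ j : Fin (N+1), (2:ℚ)^(N - (j : ℕ)) := by
        apply Fintype.sum_bijective r r.bijective
        intro j; rfl
      rw [heq, Fin.sum_univ_eq_sum_range (fun b => (2:ℚ)^(N - b)) (N+1)]
      calc ∑ k ∈ Finset.range (N+1), (2:ℚ)^(N-k)
          = ∑ k ∈ Finset.range (N+1), (fun t => (2:ℚ)^t) (N+1-1-k) := by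
            apply Finset.sum_congr rfl; intro k hk
            norm_num
        _ = ∑ k ∈ Finset.range (N+1), (2:ℚ)^k := Finset.sum_range_reflect _ _
        _ = 2^(N+1) - 1 := geo_sum _
  have hpow_ne : (2:ℚ)^(N+1) - 1 ≠ 0 := by
    have h2 : (2:ℚ)^1 ≤ 2^(N+1) := pow_le_pow_right₀ (by norm_num) (by omega)
    simp at h2
    intro h; nlinarith
  have hsum0 : ∑ i, c i = 0 := by
    have h : ∑ j : Fin (N+1), ∑ i, c i * D i j = 0 := by simp [hc']
    rw [Finset.sum_comm] at h
    have h2 : ∑ i : Fin (N+1), c i * (2^(N+1) - 1) = 0 := by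
      rw [← h]
      apply Finset.sum_congr rfl
      intro i _
      rw [← Finset.mul_sum, rowsum i]
    rw [← Finset.sum_mul] at h2
    exact (mul_eq_zero.mp h2).resolve_right hpow_ne
  -- last coefficient is zero
  have hlast0 : c (Fin.last N) = 0 := by
    have hcol0 := hc' 0
    rw [Fin.sum_univ_castSucc] at hcol0
    have e1 : ∀ i : Fin N, c i.castSucc * D i.castSucc 0 = c i.castSucc * 2^N := by
      intro i
      rw [hD' i.castSucc 0, if_pos (by simpa using i.isLt)]
      simp
    have e2 : D (Fin.last N) 0 = 2^(N - (r 0 : ℕ)) := by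
      rw [hD' (Fin.last N) 0, if_neg (by simp)]
    have e3 : ∑ i : Fin N, c i.castSucc = - c (Fin.last N) := by
      have h := hsum0
      rw [Fin.sum_univ_castSucc] at h
      linarith
    simp_rw [e1] at hcol0
    rw [← Finset.sum_mul, e3, e2] at hcol0
    have hrlt : (2:ℚ)^(N - (r 0 : ℕ)) < 2^N := by
      apply pow_lt_pow_right₀ (by norm_num)
      have h1 := (r 0).isLt
      omega
    have hfac : c (Fin.last N) * ((2:ℚ)^(N - (r 0 : ℕ)) - 2^N) = 0 := by linarith
    rcases mul_eq_zero.mp hfac with h | h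
    · exact h
    · exact absurd h (by intro hh; nlinarith)
  -- middle coefficients
  have hmid : ∀ i0 : Fin (N+1), 1 ≤ (i0:ℕ) → (i0:ℕ) < N → c i0 = 0 := by
    intro i0 h1 h2
    have ha : (i0:ℕ) < N + 1 := by omega
    have hb : (i0:ℕ) + 1 < N + 1 := by omega
    have hA := hc' ⟨(i0:ℕ), ha⟩
    have hB := hc' ⟨(i0:ℕ)+1, hb⟩
    have hcomb : ∑ i, c i * (2 * D i ⟨(i0:ℕ)+1, hb⟩ - D i ⟨(i0:ℕ), ha⟩) = 0 := by
      have he : ∀ i : Fin (N+1), c i * (2 * D i ⟨(i0:ℕ)+1, hb⟩ - D i ⟨(i0:ℕ), ha⟩)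
          = 2 * (c i * D i ⟨(i0:ℕ)+1, hb⟩) - c i * D i ⟨(i0:ℕ), ha⟩ := fun i => by ring
      rw [Finset.sum_congr rfl (fun i _ => he i), Finset.sum_sub_distrib,
        ← Finset.mul_sum, hA, hB]
      ring
    have hterm : ∀ i : Fin (N+1), c i * (2 * D i ⟨(i0:ℕ)+1, hb⟩ - D i ⟨(i0:ℕ), ha⟩)
        = if i = i0 then c i0 * (2^N - 1) else 0 := by
      intro i
      by_cases hi : (i:ℕ) < N
      · rw [hD' i ⟨(i0:ℕ)+1, hb⟩, hD' i ⟨(i0:ℕ), ha⟩, if_pos hi, if_pos hi,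
          if_neg (by simp), if_neg (by show ¬ (i0:ℕ) = 0; omega)]
        have hk := key_elim N (i0:ℕ) (i:ℕ) h1 (by omega) hi
        rw [hk]
        by_cases hij : i = i0
        · subst hij; simp
        · rw [if_neg (fun h => hij (Fin.ext h)), if_neg hij, mul_zero]
      · have hil : i = Fin.last N := by
          apply Fin.ext
          have := i.isLt
          simp only [Fin.val_last]
          omega
        rw [if_neg (by intro h; rw [h] at hil; rw [hil] at h2; simp at h2),
          hil, hlast0, zero_mul]
    rw [Finset.sum_congr rfl (fun i _ => hterm i)] at hcomb
    simp only [Finset.sum_ite_eq', Finset.mem_univ, if_true] at hcomb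
    have hne : (2:ℚ)^N - 1 ≠ 0 := by
      have h2 : (2:ℚ)^1 ≤ 2^N := pow_le_pow_right₀ (by norm_num) (by omega)
      simp at h2
      intro h; nlinarith
    exact (mul_eq_zero.mp hcomb).resolve_right hne
  have hzero' : ∀ i : Fin (N+1), i ≠ 0 → c i = 0 := by
    intro i hi
    have hvne : (i:ℕ) ≠ 0 := by
      rw [Ne, Fin.val_eq_zero_iff]; exact hi
    rcases Nat.lt_or_ge (i:ℕ) N with h | h
    · exact hmid i (by omega) h
    · have hil : i = Fin.last N := by
        apply Fin.ext
        have := i.isLt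
        simp only [Fin.val_last]
        omega
      rw [hil]; exact hlast0
  have hc0 : c 0 = 0 := by
    have h : ∑ i, c i = c 0 :=
      Finset.sum_eq_single 0 (fun b _ hb => hzero' b hb) (by simp)
    rw [hsum0] at h
    exact h.symm
  intro i
  by_cases h : i = 0
  · rw [h]; exact hc0
  · exact hzero' i h
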